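/- arXiv:2404.10993 — 7 statements merged into one kernel-verified Lean document; each statement's English description precedes it below -/
import Mathlib

section
/- For x ∈ dom(F) and α > 0, the following are equivalent: (a) x is a weakly Pareto optimal point of min F; (b) θ_α(x) = 0; (c) p_α(x) = x. -/
/-!
Let `ψ` be the maximum of the linearizations `u ↦ ⟪∇G_j(x), u - x⟫ + H_j u - H_j x`; it is convex
and vanishes at `x`. Weak Pareto optimality of `x` is equivalent to `ψ ≥ 0` on the domain: the
gradient inequality bounds each linearization by `F_j y - F_j x`, and conversely a point `y` with
`ψ y < 0` makes `y - x` a common descent direction of all the `F_j`. Moving from `x` towards `y`,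
`ψ` decreases at least linearly in the step while the proximal term grows quadratically, so
`ψ ≥ 0` on the domain exactly when the proximal objective is, i.e. when `θ_α(x) = 0`. Finally,
`θ_α(x) = 0` together with `ψ(p) ≥ 0` leaves `‖p - x‖² ≤ 0`.
-/

open RealInnerProductSpace Filter Topology Set AffineMap

lemma HasDerivAt.eventually_nhdsGT_lt_of_neg {f : ℝ → ℝ} {f' a : ℝ} (hf : HasDerivAt f f' a)
    (hf' : f' < 0) : ∀ᶠ t in 𝓝[>] a, f t < f a := by
  filter_upwards [(hasDerivAt_iff_tendsto_slope_left_right.1 hf).2 (eventually_lt_nhds hf'),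
    self_mem_nhdsWithin] with t (hslope : slope f a t < 0) (ht : a < t)
  rw [slope_def_field, div_lt_iff₀ (sub_pos.2 ht)] at hslope
  linarith

lemma convexOn_ciSup {ι E : Type*} [Finite ι] [Nonempty ι] [AddCommGroup E] [Module ℝ E]
    {s : Set E} {f : ι → E → ℝ} (hf : ∀ i, ConvexOn ℝ s (f i)) :
    ConvexOn ℝ s fun x => ⨆ i, f i x := by
  refine ⟨(hf (Classical.arbitrary ι)).1, fun x hx y hy a b ha hb hab => ciSup_le fun i => ?_⟩
  exact ((hf i).2 hx hy ha hb hab).trans (add_le_add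
    (smul_le_smul_of_nonneg_left (le_ciSup (Finite.bddAbove_range (f · x)) i) ha)
    (smul_le_smul_of_nonneg_left (le_ciSup (Finite.bddAbove_range (f · y)) i) hb))

lemma ConvexOn.forall_nonneg_iff_forall_nonneg_add_mul_norm_sq {E : Type*}
    [NormedAddCommGroup E] [NormedSpace ℝ E] {f : E → ℝ} {s : Set E} {x : E}
    (hf : ConvexOn ℝ s f) (hx : x ∈ s) (hfx : f x = 0) {c : ℝ} (hc : 0 ≤ c) :
    (∀ y ∈ s, 0 ≤ f y) ↔ ∀ y ∈ s, 0 ≤ f y + c * ‖y - x‖ ^ 2 := by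
  refine ⟨fun h y hy => add_nonneg (h y hy) (by positivity), fun h y hy => ?_⟩
  have hsegment : ∀ t ∈ Ioc (0 : ℝ) 1, 0 ≤ f y + t * (c * ‖y - x‖ ^ 2) := by
    rintro t ⟨ht0, ht1⟩
    have hmem := hf.1 hx hy (sub_nonneg.2 ht1) ht0.le (sub_add_cancel 1 t)
    have hle : f ((1 - t) • x + t • y) ≤ t * f y := by
      simpa [hfx] using hf.2 hx hy (sub_nonneg.2 ht1) ht0.le (sub_add_cancel 1 t)
    have hnorm : ‖(1 - t) • x + t • y - x‖ = t * ‖y - x‖ := by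
      rw [show (1 - t) • x + t • y - x = t • (y - x) by module, norm_smul,
        Real.norm_of_nonneg ht0.le]
    have hval := h _ hmem
    rw [hnorm] at hval
    refine (mul_nonneg_iff_of_pos_left ht0).1 ?_
    linarith
  have hlim : Tendsto (fun t : ℝ => f y + t * (c * ‖y - x‖ ^ 2)) (𝓝[>] 0) (𝓝 (f y)) := by
    have hcont : Continuous fun t : ℝ => f y + t * (c * ‖y - x‖ ^ 2) := by fun_prop
    simpa using (hcont.tendsto 0).mono_left nhdsWithin_le_nhds
  exact ge_of_tendsto hlim (mem_of_superset (Ioc_mem_nhdsGT one_pos) hsegment)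

lemma ConvexOn.add_mul_norm_sq_eq_zero_iff_of_isMinOn {E : Type*} [NormedAddCommGroup E]
    [NormedSpace ℝ E] {f : E → ℝ} {s : Set E} {x p : E} {c : ℝ} (hf : ConvexOn ℝ s f)
    (hx : x ∈ s) (hfx : f x = 0) (hc : 0 ≤ c) (hp : p ∈ s)
    (hmin : IsMinOn (fun u => f u + c * ‖u - x‖ ^ 2) s p) :
    f p + c * ‖p - x‖ ^ 2 = 0 ↔ ∀ y ∈ s, 0 ≤ f y := by
  rw [hf.forall_nonneg_iff_forall_nonneg_add_mul_norm_sq hx hfx hc]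
  refine ⟨fun h y hy => h ▸ hmin hy, fun h => le_antisymm ?_ (h p hp)⟩
  simpa [hfx] using hmin hx

section InnerProductSpace

variable {E : Type*} [NormedAddCommGroup E] [InnerProductSpace ℝ E] [CompleteSpace E]

lemma HasGradientAt.hasDerivAt_comp_lineMap {f : E → ℝ} {g x : E} (hf : HasGradientAt f g x)
    (y : E) : HasDerivAt (fun t : ℝ => f (lineMap x y t)) ⟪g, y - x⟫ 0 := by
  have h := (hasGradientAt_iff_hasFDerivAt.1 hf).comp_hasDerivAt_of_eq 0
    (hasDerivAt_lineMap (a := x) (b := y) (x := (0 : ℝ))) (lineMap_apply_zero x y).symm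
  rwa [InnerProductSpace.toDual_apply_apply] at h

lemma ConvexOn.inner_gradient_le_sub {f : E → ℝ} {s : Set E} {g x y : E} (hf : ConvexOn ℝ s f)
    (hx : x ∈ s) (hy : y ∈ s) (hg : HasGradientAt f g x) : ⟪g, y - x⟫ ≤ f y - f x := by
  have hline : ConvexOn ℝ (lineMap x y ⁻¹' s) fun t : ℝ => f (lineMap x y t) :=
    hf.comp_affineMap (lineMap x y)
  simpa [slope_def_field] using hline.le_slope_of_hasDerivAt (by simpa) (by simpa) zero_lt_one
    (hg.hasDerivAt_comp_lineMap y)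

lemma HasGradientAt.eventually_add_comp_lineMap_lt {G H : E → ℝ} {s : Set E} {g x y : E}
    (hG : HasGradientAt G g x) (hH : ConvexOn ℝ s H) (hx : x ∈ s) (hy : y ∈ s)
    (hdesc : ⟪g, y - x⟫ + H y - H x < 0) :
    ∀ᶠ t in 𝓝[>] (0 : ℝ), G (lineMap x y t) + H (lineMap x y t) < G x + H x := by
  have hderiv : HasDerivAt (fun t => G (lineMap x y t) + t * (H y - H x))
      (⟪g, y - x⟫ + (H y - H x)) 0 :=
    (hG.hasDerivAt_comp_lineMap y).add (hasDerivAt_mul_const _)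
  filter_upwards [hderiv.eventually_nhdsGT_lt_of_neg (by linarith), Ioo_mem_nhdsGT one_pos]
    with t hlt ⟨ht0, ht1⟩
  have hHt : H (lineMap x y t) ≤ (1 - t) • H x + t • H y := by
    rw [lineMap_apply_module]
    exact hH.2 hx hy (by linarith) ht0.le (sub_add_cancel 1 t)
  simp only [lineMap_apply_zero, zero_mul, add_zero, smul_eq_mul] at hlt hHt
  linarith

end InnerProductSpace

section Multiobjective

variable {ι E : Type*} [NormedAddCommGroup E] [InnerProductSpace ℝ E]

def IsWeakParetoOn (F : ι → E → ℝ) (s : Set E) (x : E) : Prop :=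
  ¬ ∃ y ∈ s, ∀ j, F j y < F j x

/-- The paper's `ψ_x`, with `g j = ∇G_j(x)`. -/
noncomputable def linearizedMax (g : ι → E) (H : ι → E → ℝ) (x u : E) : ℝ :=
  ⨆ j, (⟪g j, u - x⟫ + H j u - H j x)

variable [Nonempty ι] {g : ι → E} {H : ι → E → ℝ} {s : Set E} {x : E}

lemma linearizedMax_self : linearizedMax g H x x = 0 := by
  simp [linearizedMax]

variable [Finite ι]

lemma linearizedMax_neg_iff {y : E} :
    linearizedMax g H x y < 0 ↔ ∀ j, ⟪g j, y - x⟫ + H j y - H j x < 0 := by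
  refine ⟨fun h j => (le_ciSup (Finite.bddAbove_range _) j).trans_lt h, fun h => ?_⟩
  obtain ⟨j, hj⟩ := exists_eq_ciSup_of_finite (f := fun j => ⟪g j, y - x⟫ + H j y - H j x)
  rw [linearizedMax, ← hj]
  exact h j

lemma convexOn_linearizedMax (hH : ∀ j, ConvexOn ℝ s (H j)) :
    ConvexOn ℝ s (linearizedMax g H x) :=
  convexOn_ciSup fun j => ((((innerₛₗ ℝ (g j)).convexOn (hH j).1).add (hH j)).add_const
    (-(⟪g j, x⟫ + H j x))).congr fun u _ => by simp [inner_sub_right]; ring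

theorem isWeakParetoOn_iff_forall_linearizedMax_nonneg [CompleteSpace E] {G : ι → E → ℝ}
    (hG : ∀ j, ConvexOn ℝ s (G j)) (hg : ∀ j, HasGradientAt (G j) (g j) x)
    (hH : ∀ j, ConvexOn ℝ s (H j)) (hx : x ∈ s) :
    IsWeakParetoOn (fun j y => G j y + H j y) s x ↔ ∀ y ∈ s, 0 ≤ linearizedMax g H x y := by
  rw [IsWeakParetoOn, not_iff_comm]
  push Not
  constructor
  · rintro ⟨y, hy, hψ⟩
    have hdesc := fun j => (hg j).eventually_add_comp_lineMap_lt (hH j) hx hy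
      (linearizedMax_neg_iff.1 hψ j)
    obtain ⟨t, hlt, ht⟩ := ((eventually_all.2 hdesc).and (Ioo_mem_nhdsGT one_pos)).exists
    exact ⟨lineMap x y t, (hH (Classical.arbitrary ι)).1.lineMap_mem hx hy ⟨ht.1.le, ht.2.le⟩,
      hlt⟩
  · rintro ⟨y, hy, hlt⟩
    refine ⟨y, hy, linearizedMax_neg_iff.2 fun j => ?_⟩
    linarith [(hG j).inner_gradient_le_sub hx hy (hg j), hlt j]

end Multiobjective

theorem weakPareto_characterization_general {n m : ℕ} (hm : 0 < m)
    (G : Fin m → EuclideanSpace ℝ (Fin n) → ℝ)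
    (G' : Fin m → EuclideanSpace ℝ (Fin n) → EuclideanSpace ℝ (Fin n))
    (H : Fin m → EuclideanSpace ℝ (Fin n) → ℝ)
    (dom : Set (EuclideanSpace ℝ (Fin n)))
    (hGconv : ∀ j, ConvexOn ℝ Set.univ (G j))
    (hGdiff : ∀ j x, HasGradientAt (G j) (G' j x) x)
    (hHconv : ∀ j, ConvexOn ℝ dom (H j))
    (x : EuclideanSpace ℝ (Fin n)) (hx : x ∈ dom)
    (α : ℝ) (hα : 0 < α)
    (p : EuclideanSpace ℝ (Fin n)) (hp : p ∈ dom)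
    (hpmin : IsMinOn
      (fun u => (⨆ j, (⟪G' j x, u - x⟫ + H j u - H j x)) + 1 / (2 * α) * ‖u - x‖ ^ 2)
      dom p) :
    ((¬ ∃ y ∈ dom, ∀ j, G j y + H j y < G j x + H j x) ↔
      (⨆ j, (⟪G' j x, p - x⟫ + H j p - H j x)) + 1 / (2 * α) * ‖p - x‖ ^ 2 = 0) ∧
    (((⨆ j, (⟪G' j x, p - x⟫ + H j p - H j x)) + 1 / (2 * α) * ‖p - x‖ ^ 2 = 0) ↔ p = x) := by
  have : Nonempty (Fin m) := ⟨⟨0, hm⟩⟩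
  have hc : 0 < 1 / (2 * α) := by positivity
  have hstat := isWeakParetoOn_iff_forall_linearizedMax_nonneg
    (fun j => (hGconv j).subset (subset_univ _) (hHconv j).1) (fun j => hGdiff j x) hHconv hx
  have hθ : (⨆ j, (⟪G' j x, p - x⟫ + H j p - H j x)) + 1 / (2 * α) * ‖p - x‖ ^ 2 = 0 ↔
      ∀ y ∈ dom, 0 ≤ linearizedMax (fun j => G' j x) H x y :=
    (convexOn_linearizedMax hHconv).add_mul_norm_sq_eq_zero_iff_of_isMinOn hx linearizedMax_self
      hc.le hp hpmin
  refine ⟨hstat.trans hθ.symm, fun h0 => ?_, fun hpx => ?_⟩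
  · have hψp : 0 ≤ ⨆ j, (⟪G' j x, p - x⟫ + H j p - H j x) := hθ.1 h0 p hp
    have hnorm : ‖p - x‖ ^ 2 ≤ 0 := nonpos_of_mul_nonpos_right (by linarith) hc
    simpa [sub_eq_zero] using le_antisymm hnorm (sq_nonneg _)
  · subst hpx
    simp

/-- For `x ∈ dom F` and `α > 0`, the following are equivalent:
(a) `x` is weakly Pareto optimal for `min F`; (b) `θ_α(x) = 0`; (c) `p_α(x) = x`. -/
theorem weakPareto_characterization {n m : ℕ} (hm : 0 < m)
    (G : Fin m → EuclideanSpace ℝ (Fin n) → ℝ)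
    (G' : Fin m → EuclideanSpace ℝ (Fin n) → EuclideanSpace ℝ (Fin n))
    (H : Fin m → EuclideanSpace ℝ (Fin n) → ℝ)
    (dom : Set (EuclideanSpace ℝ (Fin n)))
    (hGconv : ∀ j, ConvexOn ℝ Set.univ (G j))
    (hGdiff : ∀ j x, HasGradientAt (G j) (G' j x) x)
    (hHconv : ∀ j, ConvexOn ℝ dom (H j))
    (hHcont : ∀ j, ContinuousOn (H j) dom)
    (hdomne : dom.Nonempty) (hdomcl : IsClosed dom) (hdomconv : Convex ℝ dom)
    (x : EuclideanSpace ℝ (Fin n)) (hx : x ∈ dom)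
    (α : ℝ) (hα : 0 < α)
    (p : EuclideanSpace ℝ (Fin n)) (hp : p ∈ dom)
    (hpmin : IsMinOn
      (fun u => (⨆ j, (⟪G' j x, u - x⟫ + H j u - H j x)) + 1 / (2 * α) * ‖u - x‖ ^ 2)
      dom p) :
    ((¬ ∃ y ∈ dom, ∀ j, G j y + H j y < G j x + H j x) ↔
      (⨆ j, (⟪G' j x, p - x⟫ + H j p - H j x)) + 1 / (2 * α) * ‖p - x‖ ^ 2 = 0) ∧
    (((⨆ j, (⟪G' j x, p - x⟫ + H j p - H j x)) + 1 / (2 * α) * ‖p - x‖ ^ 2 = 0) ↔ p = x) :=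
  weakPareto_characterization_general hm G G' H dom hGconv hGdiff hHconv x hx α hα p hp hpmin
end

section
/- The maps x ↦ p_α(x) and x ↦ θ_α(x) are continuous on dom(F). -/
open RealInnerProductSpace

section Aux
variable {E : Type*} [NormedAddCommGroup E] [InnerProductSpace ℝ E]

lemma aux_normsq (p u x : E) :
    ‖u - x‖ ^ 2 = ‖p - x‖ ^ 2 + 2 * ⟪p - x, u - p⟫ + ‖u - p‖ ^ 2 := by
  have h : u - x = (p - x) + (u - p) := by abel
  rw [h, norm_add_sq_real]

lemma aux_normsq_smul (p u x : E) (t : ℝ) :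
    ‖p + t • (u - p) - x‖ ^ 2
      = ‖p - x‖ ^ 2 + 2 * t * ⟪p - x, u - p⟫ + t ^ 2 * ‖u - p‖ ^ 2 := by
  have h : p + t • (u - p) - x = (p - x) + t • (u - p) := by abel
  rw [h, norm_add_sq_real, real_inner_smul_right, norm_smul]
  simp [mul_pow, sq_abs]
  ring

lemma aux_quad (u y z : E) :
    ‖u - y‖ ^ 2 - ‖u - z‖ ^ 2 ≤ ‖z - y‖ * (2 * ‖u‖ + ‖y‖ + 3 * ‖z‖) := by
  have h : u - y = (u - z) + (z - y) := by abel
  rw [h, norm_add_sq_real]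
  have h2 : ⟪u - z, z - y⟫ ≤ ‖u - z‖ * ‖z - y‖ := real_inner_le_norm _ _
  have h3 : ‖u - z‖ ≤ ‖u‖ + ‖z‖ := norm_sub_le _ _
  have h4 : ‖z - y‖ ≤ ‖z‖ + ‖y‖ := norm_sub_le _ _
  have h5 : (0:ℝ) ≤ ‖z - y‖ := norm_nonneg _
  have h6 : (0:ℝ) ≤ ‖u - z‖ := norm_nonneg _
  nlinarith [mul_le_mul_of_nonneg_right h3 h5, mul_le_mul_of_nonneg_right h4 h5,
    sq_nonneg (‖z - y‖)]

lemma aux_strong_min {dom : Set E} (hconv : Convex ℝ dom) {Mf : E → ℝ} {c : ℝ} (hc : 0 < c)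
    (x p : E) (hp : p ∈ dom)
    (hMconv : ∀ q ∈ dom, ∀ u ∈ dom, ∀ t : ℝ, 0 ≤ t → t ≤ 1 →
      Mf ((1 - t) • q + t • u) ≤ (1 - t) * Mf q + t * Mf u)
    (hmin : ∀ u ∈ dom, Mf p + c * ‖p - x‖ ^ 2 ≤ Mf u + c * ‖u - x‖ ^ 2) :
    ∀ u ∈ dom, Mf p + c * ‖p - x‖ ^ 2 + c * ‖u - p‖ ^ 2 ≤ Mf u + c * ‖u - x‖ ^ 2 := by
  intro u hu
  have hK : (0:ℝ) ≤ ‖u - p‖ ^ 2 := by positivity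
  have key : ∀ t : ℝ, 0 < t → t < 1 →
      Mf p ≤ Mf u + 2 * c * ⟪p - x, u - p⟫ + c * t * ‖u - p‖ ^ 2 := by
    intro t ht0 ht1
    have hw : (1 - t) • p + t • u ∈ dom :=
      hconv hp hu (by linarith) ht0.le (by ring)
    have hmw := hmin _ hw
    have hMw := hMconv p hp u hu t ht0.le ht1.le
    have hid : ‖((1 - t) • p + t • u) - x‖ ^ 2
        = ‖p - x‖ ^ 2 + 2 * t * ⟪p - x, u - p⟫ + t ^ 2 * ‖u - p‖ ^ 2 := by
      have h2 : (1 - t) • p + t • u = p + t • (u - p) := by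
        rw [sub_smul, one_smul, smul_sub]; abel
      rw [h2, aux_normsq_smul]
    rw [hid] at hmw
    have ht' : t * Mf p ≤ t * (Mf u + 2 * c * ⟪p - x, u - p⟫ + c * t * ‖u - p‖ ^ 2) := by
      nlinarith
    exact le_of_mul_le_mul_left (by linarith [ht']) ht0
  have hvar : Mf p ≤ Mf u + 2 * c * ⟪p - x, u - p⟫ := by
    by_contra hcon
    push_neg at hcon
    set r := Mf p - (Mf u + 2 * c * ⟪p - x, u - p⟫) with hr
    have hrpos : 0 < r := by simp [hr]; linarith
    have hden : (0:ℝ) < c * ‖u - p‖ ^ 2 + 1 := by positivity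
    set t := min (1/2) (r / (2 * (c * ‖u - p‖ ^ 2 + 1))) with htdef
    have ht0 : 0 < t := lt_min (by norm_num) (div_pos (by linarith) (by linarith))
    have ht1 : t < 1 := lt_of_le_of_lt (min_le_left _ _) (by norm_num)
    have hk := key t ht0 ht1
    have h2 : c * t * ‖u - p‖ ^ 2 ≤ t * (c * ‖u - p‖ ^ 2 + 1) := by nlinarith
    have h3 : t * (c * ‖u - p‖ ^ 2 + 1) ≤ r / 2 := by
      have hm := min_le_right (1/2) (r / (2 * (c * ‖u - p‖ ^ 2 + 1)))
      calc t * (c * ‖u - p‖ ^ 2 + 1)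
          ≤ (r / (2 * (c * ‖u - p‖ ^ 2 + 1))) * (c * ‖u - p‖ ^ 2 + 1) :=
            mul_le_mul_of_nonneg_right hm hden.le
        _ = r / 2 := by field_simp
    have : r ≤ r / 2 := by
      simp only [hr] at *
      linarith
    linarith
  have h5 : c * ‖u - x‖ ^ 2
      = c * ‖p - x‖ ^ 2 + 2 * c * ⟪p - x, u - p⟫ + c * ‖u - p‖ ^ 2 := by
    rw [aux_normsq p u x]; ring
  linarith

end Aux

set_option maxHeartbeats 2000000 in
/-- The maps `x ↦ p_α(x)` and `x ↦ θ_α(x)` are continuous on `dom F`. -/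
theorem pAlpha_thetaAlpha_continuous {n m : ℕ} (hm : 0 < m)
    (G : Fin m → EuclideanSpace ℝ (Fin n) → ℝ)
    (G' : Fin m → EuclideanSpace ℝ (Fin n) → EuclideanSpace ℝ (Fin n))
    (H : Fin m → EuclideanSpace ℝ (Fin n) → ℝ)
    (dom : Set (EuclideanSpace ℝ (Fin n)))
    (hGconv : ∀ j, ConvexOn ℝ Set.univ (G j))
    (hGdiff : ∀ j x, HasGradientAt (G j) (G' j x) x)
    (hG'cont : ∀ j, Continuous (G' j))
    (hHconv : ∀ j, ConvexOn ℝ dom (H j))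
    (hHcont : ∀ j, ContinuousOn (H j) dom)
    (hdomne : dom.Nonempty) (hdomcl : IsClosed dom) (hdomconv : Convex ℝ dom)
    (α : ℝ) (hα : 0 < α)
    (pα : EuclideanSpace ℝ (Fin n) → EuclideanSpace ℝ (Fin n))
    (hpα : ∀ x ∈ dom, pα x ∈ dom ∧ IsMinOn
      (fun u => (⨆ j, (⟪G' j x, u - x⟫ + H j u - H j x)) + 1 / (2 * α) * ‖u - x‖ ^ 2)
      dom (pα x)) :
    ContinuousOn pα dom ∧
    ContinuousOn
      (fun x => (⨆ j, (⟪G' j x, pα x - x⟫ + H j (pα x) - H j x)) +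
        1 / (2 * α) * ‖pα x - x‖ ^ 2) dom := by
  haveI : Nonempty (Fin m) := ⟨⟨0, hm⟩⟩
  set c : ℝ := 1 / (2 * α) with hcdef
  have hc : 0 < c := by rw [hcdef]; exact div_pos one_pos (by linarith)
  set M : EuclideanSpace ℝ (Fin n) → EuclideanSpace ℝ (Fin n) → ℝ :=
    fun x u => Finset.univ.sup' Finset.univ_nonempty
      (fun j => ⟪G' j x, u - x⟫ + H j u - H j x) with hMdef
  have hsup : ∀ x u, (⨆ j, (⟪G' j x, u - x⟫ + H j u - H j x)) = M x u :=
    fun x u => (Finset.sup'_univ_eq_ciSup _).symm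
  have hmin : ∀ x ∈ dom, ∀ u ∈ dom,
      M x (pα x) + c * ‖pα x - x‖ ^ 2 ≤ M x u + c * ‖u - x‖ ^ 2 := by
    intro x hx u hu
    have h := isMinOn_iff.mp (hpα x hx).2 u hu
    simp only [hsup] at h
    exact h
  -- convexity of the sup part
  have hMconv : ∀ x, ∀ p ∈ dom, ∀ u ∈ dom, ∀ t : ℝ, 0 ≤ t → t ≤ 1 →
      M x ((1 - t) • p + t • u) ≤ (1 - t) * M x p + t * M x u := by
    intro x p hp u hu t ht0 ht1
    apply Finset.sup'_le
    intro j _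
    have hH := (hHconv j).2 hp hu (show (0:ℝ) ≤ 1 - t by linarith) (show (0:ℝ) ≤ t from ht0)
      (show (1 - t) + t = 1 by ring)
    simp only [smul_eq_mul] at hH
    have hin : ⟪G' j x, ((1 - t) • p + t • u) - x⟫
        = (1 - t) * ⟪G' j x, p - x⟫ + t * ⟪G' j x, u - x⟫ := by
      simp only [inner_sub_right, inner_add_right, real_inner_smul_right]
      ring
    have hp' : ⟪G' j x, p - x⟫ + H j p - H j x ≤ M x p :=
      Finset.le_sup' (fun j => ⟪G' j x, p - x⟫ + H j p - H j x) (Finset.mem_univ j)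
    have hu' : ⟪G' j x, u - x⟫ + H j u - H j x ≤ M x u :=
      Finset.le_sup' (fun j => ⟪G' j x, u - x⟫ + H j u - H j x) (Finset.mem_univ j)
    have hbp := mul_le_mul_of_nonneg_left hp' (by linarith : (0:ℝ) ≤ 1 - t)
    have hbu := mul_le_mul_of_nonneg_left hu' ht0
    linarith [hH, hin, hbp, hbu]
  have hstrong : ∀ x ∈ dom, ∀ u ∈ dom,
      M x (pα x) + c * ‖pα x - x‖ ^ 2 + c * ‖u - pα x‖ ^ 2
        ≤ M x u + c * ‖u - x‖ ^ 2 :=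
    fun x hx u hu =>
      aux_strong_min hdomconv hc x (pα x) (hpα x hx).1 (hMconv x) (hmin x hx) u hu
  have hpcont : ContinuousOn pα dom := by
    intro x₀ hx₀
    have hq : pα x₀ ∈ dom := (hpα x₀ hx₀).1
    set q := pα x₀ with hqdef
    set Ef : EuclideanSpace ℝ (Fin n) → ℝ :=
      fun x => Finset.univ.sup' Finset.univ_nonempty
        (fun j => ‖G' j x - G' j x₀‖) with hEdef
    set Kf : EuclideanSpace ℝ (Fin n) → ℝ :=
      fun x => Finset.univ.sup' Finset.univ_nonempty
        (fun j => |⟪G' j x, x⟫ - ⟪G' j x₀, x₀⟫| + |H j x - H j x₀|) with hKdef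
    have hEnn : ∀ x, 0 ≤ Ef x := fun x =>
      le_trans (norm_nonneg (G' ⟨0, hm⟩ x - G' ⟨0, hm⟩ x₀))
        (Finset.le_sup' (fun j => ‖G' j x - G' j x₀‖) (Finset.mem_univ (⟨0, hm⟩ : Fin m)))
    have hKnn : ∀ x, 0 ≤ Kf x := fun x =>
      le_trans (by positivity)
        (Finset.le_sup' (fun j => |⟪G' j x, x⟫ - ⟪G' j x₀, x₀⟫| + |H j x - H j x₀|)
          (Finset.mem_univ (⟨0, hm⟩ : Fin m)))
    have hMd1 : ∀ x u, M x₀ u ≤ M x u + Ef x * ‖u‖ + Kf x := by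
      intro x u
      apply Finset.sup'_le
      intro j _
      have hexp : ⟪G' j x₀, u - x₀⟫ + H j u - H j x₀
          = (⟪G' j x, u - x⟫ + H j u - H j x)
            + (⟪G' j x₀ - G' j x, u⟫ + ((⟪G' j x, x⟫ - ⟪G' j x₀, x₀⟫) + (H j x - H j x₀))) := by
        simp only [inner_sub_left, inner_sub_right]
        ring
      have h1 : ⟪G' j x, u - x⟫ + H j u - H j x ≤ M x u :=
        Finset.le_sup' (fun j => ⟪G' j x, u - x⟫ + H j u - H j x) (Finset.mem_univ j)
      have h2 : ⟪G' j x₀ - G' j x, u⟫ ≤ Ef x * ‖u‖ := by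
        calc ⟪G' j x₀ - G' j x, u⟫ ≤ ‖G' j x₀ - G' j x‖ * ‖u‖ := real_inner_le_norm _ _
          _ = ‖G' j x - G' j x₀‖ * ‖u‖ := by rw [norm_sub_rev]
          _ ≤ Ef x * ‖u‖ := mul_le_mul_of_nonneg_right
              (Finset.le_sup' (fun j => ‖G' j x - G' j x₀‖) (Finset.mem_univ j))
              (norm_nonneg _)
      have h3 : (⟪G' j x, x⟫ - ⟪G' j x₀, x₀⟫) + (H j x - H j x₀) ≤ Kf x := by
        calc (⟪G' j x, x⟫ - ⟪G' j x₀, x₀⟫) + (H j x - H j x₀)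
            ≤ |⟪G' j x, x⟫ - ⟪G' j x₀, x₀⟫| + |H j x - H j x₀| :=
              add_le_add (le_abs_self _) (le_abs_self _)
          _ ≤ Kf x := Finset.le_sup'
              (fun j => |⟪G' j x, x⟫ - ⟪G' j x₀, x₀⟫| + |H j x - H j x₀|) (Finset.mem_univ j)
      rw [hexp]
      linarith
    have hMd2 : ∀ x u, M x u ≤ M x₀ u + Ef x * ‖u‖ + Kf x := by
      intro x u
      apply Finset.sup'_le
      intro j _
      have hexp : ⟪G' j x, u - x⟫ + H j u - H j x
          = (⟪G' j x₀, u - x₀⟫ + H j u - H j x₀)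
            + (⟪G' j x - G' j x₀, u⟫ + ((⟪G' j x₀, x₀⟫ - ⟪G' j x, x⟫) + (H j x₀ - H j x))) := by
        simp only [inner_sub_left, inner_sub_right]
        ring
      have h1 : ⟪G' j x₀, u - x₀⟫ + H j u - H j x₀ ≤ M x₀ u :=
        Finset.le_sup' (fun j => ⟪G' j x₀, u - x₀⟫ + H j u - H j x₀) (Finset.mem_univ j)
      have h2 : ⟪G' j x - G' j x₀, u⟫ ≤ Ef x * ‖u‖ := by
        calc ⟪G' j x - G' j x₀, u⟫ ≤ ‖G' j x - G' j x₀‖ * ‖u‖ := real_inner_le_norm _ _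
          _ ≤ Ef x * ‖u‖ := mul_le_mul_of_nonneg_right
              (Finset.le_sup' (fun j => ‖G' j x - G' j x₀‖) (Finset.mem_univ j))
              (norm_nonneg _)
      have h3 : (⟪G' j x₀, x₀⟫ - ⟪G' j x, x⟫) + (H j x₀ - H j x) ≤ Kf x := by
        calc (⟪G' j x₀, x₀⟫ - ⟪G' j x, x⟫) + (H j x₀ - H j x)
            ≤ |⟪G' j x, x⟫ - ⟪G' j x₀, x₀⟫| + |H j x - H j x₀| := by
              rw [abs_sub_comm (⟪G' j x, x⟫) (⟪G' j x₀, x₀⟫), abs_sub_comm (H j x) (H j x₀)]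
              exact add_le_add (le_abs_self _) (le_abs_self _)
          _ ≤ Kf x := Finset.le_sup'
              (fun j => |⟪G' j x, x⟫ - ⟪G' j x₀, x₀⟫| + |H j x - H j x₀|) (Finset.mem_univ j)
      rw [hexp]
      linarith
    have key : ∀ x ∈ dom, 2 * c * ‖pα x - q‖ ^ 2
        ≤ (Ef x + 2 * c * ‖x - x₀‖) * ‖pα x - q‖
          + (2 * Ef x * ‖q‖ + 2 * Kf x + c * ‖x - x₀‖ * (4 * ‖q‖ + 4 * ‖x‖ + 4 * ‖x₀‖)) := by
      intro x hx
      have hp : pα x ∈ dom := (hpα x hx).1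
      set p := pα x with hpdef
      have h1 := hstrong x₀ hx₀ p hp
      have h2 := hstrong x hx q hq
      have hd1 := hMd1 x p
      have hd2 := hMd2 x q
      have hq1 := aux_quad p x₀ x
      have hq2 := aux_quad q x x₀
      have hxs : ‖x₀ - x‖ = ‖x - x₀‖ := norm_sub_rev _ _
      have hqp : ‖q - p‖ = ‖p - q‖ := norm_sub_rev _ _
      rw [hxs] at hq2
      have hpn : ‖p‖ ≤ ‖p - q‖ + ‖q‖ := by
        calc ‖p‖ = ‖(p - q) + q‖ := by rw [sub_add_cancel]
          _ ≤ ‖p - q‖ + ‖q‖ := norm_add_le _ _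
      have m1 : Ef x * ‖p‖ ≤ Ef x * (‖p - q‖ + ‖q‖) :=
        mul_le_mul_of_nonneg_left hpn (hEnn x)
      have c1 : c * (‖p - x₀‖ ^ 2 - ‖p - x‖ ^ 2)
          ≤ c * (‖x - x₀‖ * (2 * ‖p‖ + ‖x₀‖ + 3 * ‖x‖)) :=
        mul_le_mul_of_nonneg_left hq1 hc.le
      have c2 : c * (‖q - x‖ ^ 2 - ‖q - x₀‖ ^ 2)
          ≤ c * (‖x - x₀‖ * (2 * ‖q‖ + ‖x‖ + 3 * ‖x₀‖)) :=
        mul_le_mul_of_nonneg_left hq2 hc.le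
      have m2 : c * (‖x - x₀‖ * (2 * ‖p‖ + ‖x₀‖ + 3 * ‖x‖))
          ≤ c * (‖x - x₀‖ * (2 * (‖p - q‖ + ‖q‖) + ‖x₀‖ + 3 * ‖x‖)) := by
        apply mul_le_mul_of_nonneg_left _ hc.le
        apply mul_le_mul_of_nonneg_left _ (norm_nonneg _)
        linarith
      rw [hqp] at h2
      nlinarith [h1, h2, hd1, hd2, c1, c2, m1, m2]
    -- continuity of the bound functions
    have hEc : Continuous Ef := by
      rw [hEdef]
      exact Continuous.finset_sup'_apply Finset.univ_nonempty
        (fun j _ => ((hG'cont j).sub continuous_const).norm)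
    have hE0 : Ef x₀ = 0 := by
      rw [hEdef]
      simp
    have hKcont : ContinuousOn Kf dom := by
      rw [hKdef]
      apply ContinuousOn.finset_sup'_apply Finset.univ_nonempty
      intro j _
      apply ContinuousOn.add
      · exact ((((hG'cont j).inner continuous_id).sub continuous_const).abs).continuousOn
      · exact ((hHcont j).sub continuousOn_const).abs
    have hK0 : Kf x₀ = 0 := by
      rw [hKdef]
      simp
    set T : EuclideanSpace ℝ (Fin n) → ℝ := fun x => Ef x + 2 * c * ‖x - x₀‖ with hTdef
    set S : EuclideanSpace ℝ (Fin n) → ℝ :=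
      fun x => 2 * Ef x * ‖q‖ + 2 * Kf x + c * ‖x - x₀‖ * (4 * ‖q‖ + 4 * ‖x‖ + 4 * ‖x₀‖)
      with hSdef
    have hT : Filter.Tendsto T (nhdsWithin x₀ dom) (nhds 0) := by
      have hTc : ContinuousWithinAt T dom x₀ := by
        apply ContinuousWithinAt.add
        · exact hEc.continuousWithinAt
        · exact (continuous_const.mul ((continuous_id.sub continuous_const).norm)).continuousWithinAt
      have hT0 : T x₀ = 0 := by
        rw [hTdef]; simp [hE0]
      rw [← hT0]
      exact hTc
    have hS : Filter.Tendsto S (nhdsWithin x₀ dom) (nhds 0) := by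
      have hSc : ContinuousWithinAt S dom x₀ := by
        apply ContinuousWithinAt.add
        apply ContinuousWithinAt.add
        · exact ((continuous_const.mul hEc).mul continuous_const).continuousWithinAt
        · exact continuousWithinAt_const.mul (hKcont x₀ hx₀)
        · exact ((continuous_const.mul ((continuous_id.sub continuous_const).norm)).mul
            ((continuous_const.add (continuous_const.mul continuous_norm)).add
              continuous_const)).continuousWithinAt
      have hS0 : S x₀ = 0 := by
        rw [hSdef]; simp [hE0, hK0]
      rw [← hS0]
      exact hSc
    rw [Metric.continuousWithinAt_iff]
    intro ε hε
    have he1 : ∀ᶠ x in nhdsWithin x₀ dom, T x < c * ε :=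
      hT.eventually_lt_const (mul_pos hc hε)
    have he2 : ∀ᶠ x in nhdsWithin x₀ dom, S x < (c / 2) * ε ^ 2 :=
      hS.eventually_lt_const (mul_pos (by linarith) (pow_pos hε 2))
    have he := he1.and he2
    rw [Filter.eventually_iff, Metric.mem_nhdsWithin_iff] at he
    obtain ⟨δ, hδ, hsub⟩ := he
    refine ⟨δ, hδ, ?_⟩
    intro x hxdom hdist
    have hx' := hsub ⟨Metric.mem_ball.mpr hdist, hxdom⟩
    obtain ⟨hTx, hSx⟩ := hx'
    have hk := key x hxdom
    rw [dist_eq_norm]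
    by_contra hge
    push_neg at hge
    clear_value T S
    set Δ := ‖pα x - q‖ with hΔdef
    clear_value Δ
    have hΔnn : 0 ≤ Δ := hΔdef ▸ norm_nonneg _
    have hΔpos : 0 < Δ := lt_of_lt_of_le hε hge
    have b1 : T x * Δ ≤ (c * ε) * Δ := mul_le_mul_of_nonneg_right hTx.le hΔnn
    have b3 : (c / 2) * ε ^ 2 ≤ (c / 2) * (ε * Δ) := by
      apply mul_le_mul_of_nonneg_left _ (by linarith : (0:ℝ) ≤ c / 2)
      nlinarith
    have b4 : (c * ε) * Δ ≤ c * (Δ * Δ) := by nlinarith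
    have b5 : (c / 2) * (ε * Δ) ≤ (c / 2) * (Δ * Δ) := by nlinarith
    have hpos : 0 < c * (Δ * Δ) := mul_pos hc (mul_pos hΔpos hΔpos)
    have hk' : 2 * c * Δ ^ 2 ≤ T x * Δ + S x := by
      simpa only [hTdef, hSdef] using hk
    have hfin : 2 * c * Δ ^ 2 < c * (Δ * Δ) + c / 2 * (Δ * Δ) := by
      calc 2 * c * Δ ^ 2 ≤ T x * Δ + S x := hk'
        _ < c * ε * Δ + c / 2 * ε ^ 2 := by
            have := mul_le_mul_of_nonneg_right hTx.le hΔnn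
            linarith
        _ ≤ c * (Δ * Δ) + c / 2 * (Δ * Δ) := by linarith
    have h2 : 2 * c * Δ ^ 2 = 2 * (c * (Δ * Δ)) := by ring
    linarith
  refine ⟨hpcont, ?_⟩
  have hmapsto : Set.MapsTo pα dom dom := fun x hx => (hpα x hx).1
  have h1 : ContinuousOn (fun x => M x (pα x)) dom := by
    simp only [hMdef]
    apply ContinuousOn.finset_sup'_apply Finset.univ_nonempty
    intro j _
    apply ContinuousOn.sub
    apply ContinuousOn.add
    · exact ContinuousOn.inner ((hG'cont j).continuousOn) (hpcont.sub continuousOn_id)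
    · exact (hHcont j).comp hpcont hmapsto
    · exact hHcont j
  have h2 : ContinuousOn (fun x => c * ‖pα x - x‖ ^ 2) dom :=
    continuousOn_const.mul (((hpcont.sub continuousOn_id).norm).pow 2)
  have h3 : ContinuousOn (fun x => M x (pα x) + c * ‖pα x - x‖ ^ 2) dom := h1.add h2
  simp only [hsup]
  exact h3
end

section
/- Under the hypothesis that G_j(x^{k+1}) ≤ G_j(x^k) + t_k⟨∇G_j(x^k), d^k⟩ + t_k(γ/2)‖d^k‖² with x^{k+1} = x^k + t_k d^k, d^k = p_α(x^k) - x^k, t_k ∈ (0,1], for every x ∈ dom(F): ‖x^{k+1} - x‖² ≤ ‖x^k - x‖² + 2α(F_j(x^k) - F_j(x^{k+1})) + 2αt_k max_{i=1,…,m}(F_i(x) - F_i(x^k)) - 2αt_k(1/α - γ/2)‖d^k‖² + t_k²‖d^k‖². -/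
/-!
The prox point `p` minimizes the convex function `ψ + ‖· - xᵏ‖² / (2α)` on `dom`. Comparing its
value with the values along the segment from `p` to `x`, on which the squared norm is strongly
convex, gives the three-point inequality
`2αψ(p) + ‖p - xᵏ‖² + ‖x - p‖² ≤ 2αψ(x) + ‖x - xᵏ‖²`.
The gradient inequality bounds `ψ(x)` by `maxᵢ (Fᵢ(x) - Fᵢ(xᵏ))`, and the sufficient-decrease
hypothesis together with convexity of `H_j` gives `F_j(xᵏ⁺¹) ≤ F_j(xᵏ) + t ψ(p) + t (γ/2) ‖d‖²`.
Expanding `‖xᵏ + t d - x‖²` and adding these estimates yields the claim.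
-/

open RealInnerProductSpace

theorem ConvexOn.hasFDerivAt_apply_sub_le {E : Type*} [NormedAddCommGroup E] [NormedSpace ℝ E]
    {f : E → ℝ} {f' : E →L[ℝ] ℝ} {y : E} (hf : ConvexOn ℝ Set.univ f) (hf' : HasFDerivAt f f' y)
    (v : E) : f' (v - y) ≤ f v - f y := by
  have hline : HasDerivAt (AffineMap.lineMap (k := ℝ) y v) (v - y) 0 :=
    AffineMap.hasDerivAt_lineMap
  have hderiv : HasDerivAt (f ∘ AffineMap.lineMap (k := ℝ) y v) (f' (v - y)) 0 :=
    HasFDerivAt.comp_hasDerivAt (0 : ℝ) (by simpa using hf') hline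
  have hconv : ConvexOn ℝ Set.univ (f ∘ AffineMap.lineMap (k := ℝ) y v) := by
    simpa using hf.comp_affineMap (AffineMap.lineMap y v)
  simpa [slope_def_field] using
    hconv.le_slope_of_hasDerivAt (Set.mem_univ 0) (Set.mem_univ 1) zero_lt_one hderiv

theorem ConvexOn.inner_gradient_sub_le {E : Type*} [NormedAddCommGroup E] [InnerProductSpace ℝ E]
    [CompleteSpace E] {f : E → ℝ} {g y : E} (hf : ConvexOn ℝ Set.univ f)
    (hg : HasGradientAt f g y) (v : E) : ⟪g, v - y⟫ ≤ f v - f y := by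
  simpa using hf.hasFDerivAt_apply_sub_le hg.hasFDerivAt v

theorem ConvexOn.ciSup {E ι : Type*} [AddCommMonoid E] [Module ℝ E] [Finite ι] [Nonempty ι]
    {s : Set E} {f : ι → E → ℝ} (hf : ∀ i, ConvexOn ℝ s (f i)) :
    ConvexOn ℝ s (fun x => ⨆ i, f i x) := by
  refine ⟨(hf (Classical.arbitrary ι)).1, fun x hx y hy a b ha hb hab => ciSup_le fun i => ?_⟩
  calc f i (a • x + b • y) ≤ a * f i x + b * f i y := (hf i).2 hx hy ha hb hab
    _ ≤ a * (⨆ i, f i x) + b * ⨆ i, f i y := by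
      gcongr <;> exact le_ciSup (Set.finite_range (f · _)).bddAbove i

theorem norm_one_sub_smul_add_smul_sub_sq {E : Type*} [NormedAddCommGroup E] [InnerProductSpace ℝ E]
    (a b z : E) (l : ℝ) :
    ‖((1 - l) • a + l • b) - z‖ ^ 2
      = (1 - l) * ‖a - z‖ ^ 2 + l * ‖b - z‖ ^ 2 - l * (1 - l) * ‖b - a‖ ^ 2 := by
  have hb : b - z = (a - z) + (b - a) := by abel
  rw [show (1 - l) • a + l • b - z = (a - z) + l • (b - a) by module, hb, norm_add_sq_real,
    norm_add_sq_real, real_inner_smul_right, norm_smul, mul_pow, Real.norm_eq_abs, sq_abs]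
  ring

theorem ConvexOn.add_norm_sub_sq_le_of_isMinOn {E : Type*} [NormedAddCommGroup E]
    [InnerProductSpace ℝ E] {s : Set E} {φ : E → ℝ} {c : ℝ} {z p x : E}
    (hφ : ConvexOn ℝ s φ) (hp : p ∈ s) (hx : x ∈ s)
    (hmin : IsMinOn (fun u => φ u + c * ‖u - z‖ ^ 2) s p) :
    φ p + c * ‖p - z‖ ^ 2 + c * ‖x - p‖ ^ 2 ≤ φ x + c * ‖x - z‖ ^ 2 := by
  have hsegment : ∀ l ∈ Set.Ioc (0 : ℝ) 1,
      φ p + c * ‖p - z‖ ^ 2 + (1 - l) * (c * ‖x - p‖ ^ 2) ≤ φ x + c * ‖x - z‖ ^ 2 := by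
    rintro l ⟨hl0, hl1⟩
    have hmem : (1 - l) • p + l • x ∈ s := hφ.1 hp hx (by linarith) hl0.le (by ring)
    have hφl : φ ((1 - l) • p + l • x) ≤ (1 - l) * φ p + l * φ x :=
      hφ.2 hp hx (by linarith) hl0.le (by ring)
    have hminl : φ p + c * ‖p - z‖ ^ 2
        ≤ φ ((1 - l) • p + l • x) + c * ‖(1 - l) • p + l • x - z‖ ^ 2 := hmin hmem
    rw [norm_one_sub_smul_add_smul_sub_sq] at hminl
    refine le_of_mul_le_mul_left ?_ hl0
    linear_combination hminl + hφl
  have hlim : Filter.Tendsto (fun l : ℝ => φ p + c * ‖p - z‖ ^ 2 + (1 - l) * (c * ‖x - p‖ ^ 2))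
      (nhdsWithin 0 (Set.Ioi 0)) (nhds (φ p + c * ‖p - z‖ ^ 2 + (1 - 0) * (c * ‖x - p‖ ^ 2))) :=
    (Continuous.tendsto (by fun_prop) 0).mono_left nhdsWithin_le_nhds
  simpa using le_of_tendsto hlim (Filter.eventually_of_mem
    (Ioc_mem_nhdsGT_of_mem (by simp : (0 : ℝ) ∈ Set.Ico 0 1)) hsegment)

section MaxLinearization

variable {ι E : Type*} [NormedAddCommGroup E] [InnerProductSpace ℝ E]

/-- The paper's `ψ_y`, with `g i` playing the role of `∇G_i(y)`. -/
noncomputable def maxLinearization (g : ι → E) (H : ι → E → ℝ) (y u : E) : ℝ :=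
  ⨆ i, (⟪g i, u - y⟫ + H i u - H i y)

theorem convexOn_maxLinearization [Finite ι] [Nonempty ι] {s : Set E} (g : ι → E)
    {H : ι → E → ℝ} (hH : ∀ i, ConvexOn ℝ s (H i)) (y : E) :
    ConvexOn ℝ s (maxLinearization g H y) := by
  refine ConvexOn.ciSup fun i => ?_
  have hsplit : (fun u => ⟪g i, u - y⟫ + H i u - H i y)
      = fun u => (H i u + innerₛₗ ℝ (g i) u) + (-⟪g i, y⟫ - H i y) := by
    funext u
    rw [innerₛₗ_apply_apply, inner_sub_right]
    ring
  rw [hsplit]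
  exact ((hH i).add ((innerₛₗ ℝ (g i)).convexOn (hH i).1)).add_const _

theorem le_maxLinearization [Finite ι] (g : ι → E) (H : ι → E → ℝ) (y u : E) (i : ι) :
    ⟪g i, u - y⟫ + H i u - H i y ≤ maxLinearization g H y u :=
  le_ciSup (Set.finite_range fun i => ⟪g i, u - y⟫ + H i u - H i y).bddAbove i

theorem maxLinearization_le_iSup_sub [CompleteSpace E] [Finite ι] [Nonempty ι]
    {G H : ι → E → ℝ} {g : ι → E} {y : E} (hG : ∀ i, ConvexOn ℝ Set.univ (G i))
    (hg : ∀ i, HasGradientAt (G i) (g i) y) (x : E) :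
    maxLinearization g H y x ≤ ⨆ i, ((G i x + H i x) - (G i y + H i y)) :=
  ciSup_le fun i => by
    have := (hG i).inner_gradient_sub_le (hg i) x
    have := le_ciSup (Set.finite_range fun i => (G i x + H i x) - (G i y + H i y)).bddAbove i
    linarith

end MaxLinearization

theorem key_fejer_inequality_general {n m : ℕ}
    (G : Fin m → EuclideanSpace ℝ (Fin n) → ℝ)
    (G' : Fin m → EuclideanSpace ℝ (Fin n) → EuclideanSpace ℝ (Fin n))
    (H : Fin m → EuclideanSpace ℝ (Fin n) → ℝ)
    (dom : Set (EuclideanSpace ℝ (Fin n)))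
    (hGconv : ∀ j, ConvexOn ℝ Set.univ (G j))
    (hGdiff : ∀ j x, HasGradientAt (G j) (G' j x) x)
    (hHconv : ∀ j, ConvexOn ℝ dom (H j))
    (α γ : ℝ) (hα : 0 < α)
    (xk p : EuclideanSpace ℝ (Fin n)) (hxk : xk ∈ dom) (hp : p ∈ dom)
    (hpmin : IsMinOn
      (fun u => (⨆ i, (⟪G' i xk, u - xk⟫ + H i u - H i xk)) + 1 / (2 * α) * ‖u - xk‖ ^ 2)
      dom p)
    (tk : ℝ) (htk0 : 0 < tk) (htk1 : tk ≤ 1)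
    (j : Fin m)
    (hdec : G j (xk + tk • (p - xk)) ≤
      G j xk + tk * ⟪G' j xk, p - xk⟫ + tk * (γ / 2) * ‖p - xk‖ ^ 2) :
    ∀ x ∈ dom,
      ‖(xk + tk • (p - xk)) - x‖ ^ 2 ≤ ‖xk - x‖ ^ 2
        + 2 * α * ((G j xk + H j xk) - (G j (xk + tk • (p - xk)) + H j (xk + tk • (p - xk))))
        + 2 * α * tk * (⨆ i, ((G i x + H i x) - (G i xk + H i xk)))
        - 2 * α * tk * (1 / α - γ / 2) * ‖p - xk‖ ^ 2
        + tk ^ 2 * ‖p - xk‖ ^ 2 := by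
  intro x hx
  have : Nonempty (Fin m) := ⟨j⟩
  have hprox := (convexOn_maxLinearization (G' · xk) hHconv xk).add_norm_sub_sq_le_of_isMinOn
    hp hx hpmin
  have hψx := maxLinearization_le_iSup_sub (H := H) hGconv (hGdiff · xk) x
  have hψp := le_maxLinearization (G' · xk) H xk p j
  have hHj : H j (xk + tk • (p - xk)) ≤ (1 - tk) * H j xk + tk * H j p := by
    rw [show xk + tk • (p - xk) = (1 - tk) • xk + tk • p by module]
    exact (hHconv j).2 hxk hp (by linarith) htk0.le (by ring)
  have hstep : ‖xk + tk • (p - xk) - x‖ ^ 2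
      = ‖xk - x‖ ^ 2 + 2 * tk * ⟪xk - x, p - xk⟫ + tk ^ 2 * ‖p - xk‖ ^ 2 := by
    rw [show xk + tk • (p - xk) - x = (xk - x) + tk • (p - xk) by module, norm_add_sq_real,
      real_inner_smul_right, norm_smul, mul_pow, Real.norm_eq_abs, sq_abs]
    ring
  have hfar : ‖x - p‖ ^ 2 = ‖xk - x‖ ^ 2 + 2 * ⟪xk - x, p - xk⟫ + ‖p - xk‖ ^ 2 := by
    rw [norm_sub_rev, show p - x = (xk - x) + (p - xk) by abel, norm_add_sq_real]
  rw [norm_sub_rev x xk, hfar] at hprox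
  field_simp at hprox ⊢
  rw [hstep]
  linear_combination tk * hprox + (2 * α * tk) * hψx + (2 * α) * hdec + (2 * α) * hHj
    + (2 * α * tk) * hψp

/-- Key inequality: under the sufficient-decrease condition for index `j`, for every
`x ∈ dom F`,
`‖x^{k+1} - x‖² ≤ ‖x^k - x‖² + 2α(F_j(x^k) - F_j(x^{k+1})) + 2αt_k max_i (F_i(x) - F_i(x^k))
  - 2αt_k(1/α - γ/2)‖d^k‖² + t_k²‖d^k‖²`. -/
theorem key_fejer_inequality {n m : ℕ} (hm : 0 < m)
    (G : Fin m → EuclideanSpace ℝ (Fin n) → ℝ)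
    (G' : Fin m → EuclideanSpace ℝ (Fin n) → EuclideanSpace ℝ (Fin n))
    (H : Fin m → EuclideanSpace ℝ (Fin n) → ℝ)
    (dom : Set (EuclideanSpace ℝ (Fin n)))
    (hGconv : ∀ j, ConvexOn ℝ Set.univ (G j))
    (hGdiff : ∀ j x, HasGradientAt (G j) (G' j x) x)
    (hHconv : ∀ j, ConvexOn ℝ dom (H j))
    (hdomconv : Convex ℝ dom)
    (α γ : ℝ) (hα : 0 < α) (hγ : 0 < γ)
    (xk p : EuclideanSpace ℝ (Fin n)) (hxk : xk ∈ dom) (hp : p ∈ dom)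
    (hpmin : IsMinOn
      (fun u => (⨆ i, (⟪G' i xk, u - xk⟫ + H i u - H i xk)) + 1 / (2 * α) * ‖u - xk‖ ^ 2)
      dom p)
    (tk : ℝ) (htk0 : 0 < tk) (htk1 : tk ≤ 1)
    (j : Fin m)
    (hdec : G j (xk + tk • (p - xk)) ≤
      G j xk + tk * ⟪G' j xk, p - xk⟫ + tk * (γ / 2) * ‖p - xk‖ ^ 2) :
    ∀ x ∈ dom,
      ‖(xk + tk • (p - xk)) - x‖ ^ 2 ≤ ‖xk - x‖ ^ 2
        + 2 * α * ((G j xk + H j xk) - (G j (xk + tk • (p - xk)) + H j (xk + tk • (p - xk))))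
        + 2 * α * tk * (⨆ i, ((G i x + H i x) - (G i xk + H i xk)))
        - 2 * α * tk * (1 / α - γ / 2) * ‖p - xk‖ ^ 2
        + tk ^ 2 * ‖p - xk‖ ^ 2 :=
  key_fejer_inequality_general G G' H dom hGconv hGdiff hHconv α γ hα xk p hxk hp hpmin tk htk0 htk1
    j hdec
end

section
/- Under the hypothesis that G_j(x^{k+1}) ≤ G_j(x^k) + t_k⟨∇G_j(x^k), d^k⟩ + t_k(γ/2)‖d^k‖² with x^{k+1} = x^k + t_k d^k, d^k = p_α(x^k) - x^k, t_k ∈ (0,1], one has F_j(x^{k+1}) - F_j(x^k) ≤ -t_k(1/α - γ/2)‖d^k‖². In particular, if γ < 2/α then F_j decreases whenever d^k ≠ 0. -/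
open RealInnerProductSpace

set_option maxHeartbeats 1000000

/-- Under the sufficient-decrease condition for index `j`,
`F_j(x^{k+1}) - F_j(x^k) ≤ -t_k(1/α - γ/2)‖d^k‖²`; in particular, if `γ < 2/α`,
`F_j` strictly decreases whenever `d^k ≠ 0`. -/
theorem objective_decrease {n m : ℕ} (hm : 0 < m)
    (G : Fin m → EuclideanSpace ℝ (Fin n) → ℝ)
    (G' : Fin m → EuclideanSpace ℝ (Fin n) → EuclideanSpace ℝ (Fin n))
    (H : Fin m → EuclideanSpace ℝ (Fin n) → ℝ)
    (dom : Set (EuclideanSpace ℝ (Fin n)))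
    (hGconv : ∀ j, ConvexOn ℝ Set.univ (G j))
    (hGdiff : ∀ j x, HasGradientAt (G j) (G' j x) x)
    (hHconv : ∀ j, ConvexOn ℝ dom (H j))
    (hdomconv : Convex ℝ dom)
    (α γ : ℝ) (hα : 0 < α) (hγ : 0 < γ) (hγ2 : γ < 2 / α)
    (xk p : EuclideanSpace ℝ (Fin n)) (hxk : xk ∈ dom) (hp : p ∈ dom)
    (hpmin : IsMinOn
      (fun u => (⨆ i, (⟪G' i xk, u - xk⟫ + H i u - H i xk)) + 1 / (2 * α) * ‖u - xk‖ ^ 2)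
      dom p)
    (tk : ℝ) (htk0 : 0 < tk) (htk1 : tk ≤ 1)
    (j : Fin m)
    (hdec : G j (xk + tk • (p - xk)) ≤
      G j xk + tk * ⟪G' j xk, p - xk⟫ + tk * (γ / 2) * ‖p - xk‖ ^ 2) :
    ((G j (xk + tk • (p - xk)) + H j (xk + tk • (p - xk))) - (G j xk + H j xk) ≤
      -(tk * (1 / α - γ / 2) * ‖p - xk‖ ^ 2)) ∧
    (p - xk ≠ 0 →
      G j (xk + tk • (p - xk)) + H j (xk + tk • (p - xk)) < G j xk + H j xk) := by
  haveI : Nonempty (Fin m) := ⟨⟨0, hm⟩⟩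
  set B : ℝ := ‖p - xk‖ ^ 2 with hB
  set c : ℝ := 1 / (2 * α) with hc
  have hcpos : 0 < c := by positivity
  set φp : ℝ := ⨆ i, (⟪G' i xk, p - xk⟫ + H i p - H i xk) with hφp
  -- key step inequality for each l ∈ (0,1)
  have key : ∀ l : ℝ, 0 < l → l < 1 → φp ≤ -((1 + l) * c) * B := by
    intro l hl0 hl1
    set u : EuclideanSpace ℝ (Fin n) := xk + l • (p - xk) with hu
    have hueq : u = (1 - l) • xk + l • p := by
      rw [hu]; module
    have hudom : u ∈ dom := by
      rw [hueq]
      exact hdomconv hxk hp (by linarith) hl0.le (by ring)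
    have hmin := (isMinOn_iff.mp hpmin) u hudom
    have husub : u - xk = l • (p - xk) := by rw [hu]; abel
    have hsup_u : (⨆ i, (⟪G' i xk, u - xk⟫ + H i u - H i xk)) ≤ l * φp := by
      apply ciSup_le
      intro i
      have h1 : ⟪G' i xk, u - xk⟫ = l * ⟪G' i xk, p - xk⟫ := by
        rw [husub, real_inner_smul_right]
      have h2 : H i u ≤ (1 - l) * H i xk + l * H i p := by
        rw [hueq]
        exact (hHconv i).2 hxk hp (by linarith) hl0.le (by ring)
      have h3 : (⟪G' i xk, p - xk⟫ + H i p - H i xk) ≤ φp := by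
        rw [hφp]
        exact le_ciSup (Finite.bddAbove_range fun i => (⟪G' i xk, p - xk⟫ + H i p - H i xk)) i
      nlinarith [mul_le_mul_of_nonneg_left h3 hl0.le]
    have hnorm : ‖u - xk‖ ^ 2 = l ^ 2 * B := by
      rw [husub, norm_smul, Real.norm_eq_abs, mul_pow, sq_abs, hB]
    rw [hnorm] at hmin
    have hBn : (0:ℝ) ≤ B := by positivity
    -- hmin : φp + c * B ≤ sup_u + c * (l^2 * B)
    have h5 : (1 - l) * (φp + (1 + l) * c * B) ≤ 0 := by nlinarith
    by_contra hcon
    push_neg at hcon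
    nlinarith [mul_pos (by linarith : (0:ℝ) < 1 - l) (by linarith : (0:ℝ) < φp + (1 + l) * c * B)]
  -- take the limit l → 1⁻
  have hlim : Filter.Tendsto (fun l : ℝ => -((1 + l) * c) * B) (nhdsWithin 1 (Set.Iio 1))
      (nhds (-((1 + 1) * c) * B)) := by
    apply Filter.Tendsto.mono_left _ nhdsWithin_le_nhds
    exact (Continuous.tendsto (by continuity) 1)
  have hev : ∀ᶠ l in nhdsWithin (1:ℝ) (Set.Iio 1), φp ≤ -((1 + l) * c) * B := by
    have e1 : ∀ᶠ l in nhdsWithin (1:ℝ) (Set.Iio 1), 0 < l :=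
      (eventually_gt_nhds one_pos).filter_mono nhdsWithin_le_nhds
    have e2 : ∀ᶠ l in nhdsWithin (1:ℝ) (Set.Iio 1), l < 1 :=
      eventually_mem_nhdsWithin.mono (fun l hl => hl)
    filter_upwards [e1, e2] with l h1 h2
    exact key l h1 h2
  have hφple : φp ≤ -(1 / α) * B := by
    have := ge_of_tendsto hlim hev
    have h2c : -((1 + 1) * c) * B = -(1 / α) * B := by
      rw [hc]
      field_simp
      ring
    linarith [h2c ▸ this]
  have hA : (⟪G' j xk, p - xk⟫ + H j p - H j xk) ≤ φp := by
    rw [hφp]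
    exact le_ciSup (Finite.bddAbove_range fun i => (⟪G' i xk, p - xk⟫ + H i p - H i xk)) j
  -- convexity bound for H j
  have hH : H j (xk + tk • (p - xk)) ≤ (1 - tk) * H j xk + tk * H j p := by
    have heq : xk + tk • (p - xk) = (1 - tk) • xk + tk • p := by module
    rw [heq]
    exact (hHconv j).2 hxk hp (by linarith) htk0.le (by ring)
  have main : (G j (xk + tk • (p - xk)) + H j (xk + tk • (p - xk))) - (G j xk + H j xk) ≤
      -(tk * (1 / α - γ / 2) * B) := by
    have hAle : (⟪G' j xk, p - xk⟫ + H j p - H j xk) ≤ -(1 / α) * B := le_trans hA hφple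
    nlinarith [mul_le_mul_of_nonneg_left hAle htk0.le]
  refine ⟨main, fun hd => ?_⟩
  have hBpos : 0 < B := by
    rw [hB]
    exact pow_pos (norm_pos_iff.mpr hd) 2
  have hcoef : 0 < 1 / α - γ / 2 := by
    rw [sub_pos, div_lt_div_iff₀ (by norm_num) hα]
    rw [lt_div_iff₀ hα] at hγ2
    linarith
  nlinarith [mul_pos (mul_pos htk0 hcoef) hBpos]
end

section
/- The sequence {x^k} generated by the MPG algorithm is monotone in the sense that F(x^{k+1}) ⪯ F(x^k) componentwise for all k, i.e., F_j(x^{k+1}) ≤ F_j(x^k) for every j = 1,…,m and every k ∈ ℕ. -/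
open RealInnerProductSpace

set_option maxHeartbeats 1000000 in
/-- The MPG sequence is monotone: `F(x^{k+1}) ⪯ F(x^k)` componentwise for all `k`. -/
theorem MPG_monotone {n m : ℕ} (hm : 0 < m)
    (G : Fin m → EuclideanSpace ℝ (Fin n) → ℝ)
    (G' : Fin m → EuclideanSpace ℝ (Fin n) → EuclideanSpace ℝ (Fin n))
    (H : Fin m → EuclideanSpace ℝ (Fin n) → ℝ)
    (dom : Set (EuclideanSpace ℝ (Fin n)))
    (hGconv : ∀ j, ConvexOn ℝ Set.univ (G j))
    (hGdiff : ∀ j x, HasGradientAt (G j) (G' j x) x)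
    (hHconv : ∀ j, ConvexOn ℝ dom (H j))
    (hdomconv : Convex ℝ dom)
    (α γ : ℝ) (hα : 0 < α) (hγ : 0 < γ) (hγ2 : γ < 2 / α)
    (x p : ℕ → EuclideanSpace ℝ (Fin n)) (t : ℕ → ℝ)
    (hx : ∀ k, x k ∈ dom) (hp : ∀ k, p k ∈ dom)
    (hpmin : ∀ k, IsMinOn
      (fun u => (⨆ i, (⟪G' i (x k), u - x k⟫ + H i u - H i (x k))) +
        1 / (2 * α) * ‖u - x k‖ ^ 2) dom (p k))
    (ht : ∀ k, 0 < t k ∧ t k ≤ 1)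
    (hiter : ∀ k, x (k + 1) = x k + t k • (p k - x k))
    (hLS : ∀ k,
      (∃ jstar : Fin m,
        (∀ j, ⟪G' j (x k), p k - x k⟫ ≤ ⟪G' jstar (x k), p k - x k⟫) ∧
        G jstar (x (k + 1)) ≤ G jstar (x k) + t k * ⟪G' jstar (x k), p k - x k⟫ +
          t k * (γ / 2) * ‖p k - x k‖ ^ 2 ∧
        (∀ j, G j (x (k + 1)) + H j (x (k + 1)) ≤ G j (x k) + H j (x k))) ∨
      (∀ j, G j (x (k + 1)) ≤ G j (x k) + t k * ⟪G' j (x k), p k - x k⟫ +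
        t k * (γ / 2) * ‖p k - x k‖ ^ 2)) :
    ∀ k, ∀ j, G j (x (k + 1)) + H j (x (k + 1)) ≤ G j (x k) + H j (x k) := by
  intro k j
  rcases hLS k with ⟨_, _, _, hmono⟩ | hLS2
  · exact hmono j
  obtain ⟨htk0, htk1⟩ := ht k
  have hxk := hx k
  have hpk := hp k
  haveI : Nonempty (Fin m) := ⟨⟨0, hm⟩⟩
  set f : Fin m → EuclideanSpace ℝ (Fin n) → ℝ :=
    fun i u => ⟪G' i (x k), u - x k⟫ + H i u - H i (x k) with hf
  have hbdd : ∀ u, BddAbove (Set.range fun i => f i u) :=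
    fun u => (Set.finite_range _).bddAbove
  -- choose the convex combination parameter
  set b : ℝ := max 0 (α * γ - 1) with hb
  have hb0 : 0 ≤ b := le_max_left _ _
  have hαγ : α * γ < 2 := by
    have h := (lt_div_iff₀ hα).mp hγ2
    nlinarith
  have hb1 : b < 1 := max_lt one_pos (by linarith)
  have h1b : α * γ ≤ 1 + b := by
    rcases le_or_gt (α * γ - 1) 0 with h | h
    · have : b = 0 := by rw [hb]; exact max_eq_left h
      rw [this]; linarith
    · have : b = α * γ - 1 := by rw [hb]; exact max_eq_right h.le
      rw [this]; ring_nf; rfl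
  -- the convex combination point
  set u : EuclideanSpace ℝ (Fin n) := (1 - b) • x k + b • p k with hu
  have hudom : u ∈ dom := hdomconv hxk hpk (by linarith) hb0 (by ring)
  have hud : u - x k = b • (p k - x k) := by rw [hu]; module
  -- each f i at u is ≤ b * f i (p k)
  have hfiu : ∀ i, f i u ≤ b * f i (p k) := by
    intro i
    have hH : H i u ≤ (1 - b) * H i (x k) + b * H i (p k) :=
      (hHconv i).2 hxk hpk (by linarith) hb0 (by ring)
    have hin : ⟪G' i (x k), u - x k⟫ = b * ⟪G' i (x k), p k - x k⟫ := by
      rw [hud, real_inner_smul_right]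
    simp only [hf]
    rw [hin]
    nlinarith [hH]
  -- sup bound at u
  have hsup_u : (⨆ i, f i u) ≤ b * (⨆ i, f i (p k)) := by
    refine ciSup_le fun i => (hfiu i).trans ?_
    exact mul_le_mul_of_nonneg_left (le_ciSup (hbdd (p k)) i) hb0
  -- norms
  have hnorm_u : ‖u - x k‖ ^ 2 = b ^ 2 * ‖p k - x k‖ ^ 2 := by
    rw [hud, norm_smul, Real.norm_eq_abs, abs_of_nonneg hb0, mul_pow]
  -- minimality
  have hmin : (⨆ i, f i (p k)) + 1 / (2 * α) * ‖p k - x k‖ ^ 2 ≤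
      (⨆ i, f i u) + 1 / (2 * α) * ‖u - x k‖ ^ 2 := isMinOn_iff.mp (hpmin k) u hudom
  -- conclude the key bound on sup at p k
  have hSp : (⨆ i, f i (p k)) ≤ -(γ / 2) * ‖p k - x k‖ ^ 2 := by
    have hαinv : (0:ℝ) < 1 / (2 * α) := by positivity
    have h2 : (1 - b) * (⨆ i, f i (p k)) ≤
        -(1 / (2 * α)) * (1 - b ^ 2) * ‖p k - x k‖ ^ 2 := by
      rw [hnorm_u] at hmin
      nlinarith [hmin, hsup_u]
    have h1b' : (0:ℝ) < 1 - b := by linarith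
    have h3 : (⨆ i, f i (p k)) ≤ -(1 / (2 * α)) * (1 + b) * ‖p k - x k‖ ^ 2 := by
      have h2' : (1 - b) * (⨆ i, f i (p k)) ≤
          (1 - b) * (-(1 / (2 * α)) * (1 + b) * ‖p k - x k‖ ^ 2) := by
        have heq : -(1 / (2 * α)) * (1 - b ^ 2) * ‖p k - x k‖ ^ 2 =
            (1 - b) * (-(1 / (2 * α)) * (1 + b) * ‖p k - x k‖ ^ 2) := by ring
        linarith [h2, heq.le, heq.ge]
      exact le_of_mul_le_mul_left h2' h1b'
    refine h3.trans ?_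
    have hgc : γ / 2 ≤ 1 / (2 * α) * (1 + b) := by
      have hmul := mul_le_mul_of_nonneg_left h1b hαinv.le
      have heq : 1 / (2 * α) * (α * γ) = γ / 2 := by field_simp
      linarith [heq.le, heq.ge]
    nlinarith [sq_nonneg ‖p k - x k‖, hgc]
  -- componentwise bound
  have hfj : f j (p k) ≤ -(γ / 2) * ‖p k - x k‖ ^ 2 :=
    (le_ciSup (hbdd (p k)) j).trans hSp
  -- the iterate as a convex combination
  have hxk1 : x (k + 1) = (1 - t k) • x k + t k • p k := by
    rw [hiter k]; module
  have hHj : H j (x (k + 1)) ≤ (1 - t k) * H j (x k) + t k * H j (p k) := by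
    rw [hxk1]
    exact (hHconv j).2 hxk hpk (by linarith) htk0.le (by ring)
  have hGj := hLS2 j
  have hkey : t k * (f j (p k) + γ / 2 * ‖p k - x k‖ ^ 2) ≤ 0 :=
    mul_nonpos_of_nonneg_of_nonpos htk0.le (by nlinarith [hfj])
  simp only [hf] at hkey
  linarith [hGj, hHj, hkey]
end

section
/- Under assumption (A2), there exists a constant c > 0 (namely c = [1 + 1/(2 - γα)]/t_min) such that for all k, θ_α(x^k) ≥ c(F_{j*_k}(x^{k+1}) - F_{j*_k}(x^k)), where j*_k ∈ argmax_j ⟨∇G_j(x^k), d^k⟩. -/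
open RealInnerProductSpace

/-- Under assumption (A2), with `c = (1 + 1/(2 - γα))/t_min > 0`, one has
`θ_α(x^k) ≥ c (F_{j*_k}(x^{k+1}) - F_{j*_k}(x^k))` for all `k`. -/
theorem theta_lower_bound {n m : ℕ} (hm : 0 < m)
    (G : Fin m → EuclideanSpace ℝ (Fin n) → ℝ)
    (G' : Fin m → EuclideanSpace ℝ (Fin n) → EuclideanSpace ℝ (Fin n))
    (H : Fin m → EuclideanSpace ℝ (Fin n) → ℝ)
    (dom : Set (EuclideanSpace ℝ (Fin n)))
    (hGconv : ∀ j, ConvexOn ℝ Set.univ (G j))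
    (hGdiff : ∀ j x, HasGradientAt (G j) (G' j x) x)
    (hHconv : ∀ j, ConvexOn ℝ dom (H j))
    (hdomconv : Convex ℝ dom)
    (L : Fin m → ℝ) (hL : ∀ j, 0 < L j)
    (hlip : ∀ j x y, ‖G' j y - G' j x‖ ≤ L j * ‖y - x‖)
    (α γ τ₁ : ℝ) (hα : 0 < α) (hγ : 0 < γ) (hγ2 : γ < 2 / α) (hτ₁ : 0 < τ₁)
    (x p : ℕ → EuclideanSpace ℝ (Fin n)) (t : ℕ → ℝ) (jstar : ℕ → Fin m)
    (hx : ∀ k, x k ∈ dom) (hp : ∀ k, p k ∈ dom)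
    (hpmin : ∀ k, IsMinOn
      (fun u => (⨆ i, (⟪G' i (x k), u - x k⟫ + H i u - H i (x k))) +
        1 / (2 * α) * ‖u - x k‖ ^ 2) dom (p k))
    (ht : ∀ k, 0 < t k ∧ t k ≤ 1)
    (htmin : ∀ k, t k ≥ min 1 (τ₁ * γ / (⨆ j, L j)))
    (hiter : ∀ k, x (k + 1) = x k + t k • (p k - x k))
    (hjstar : ∀ k, ∀ j, ⟪G' j (x k), p k - x k⟫ ≤ ⟪G' (jstar k) (x k), p k - x k⟫)
    (hdec : ∀ k, G (jstar k) (x (k + 1)) ≤ G (jstar k) (x k) +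
      t k * ⟪G' (jstar k) (x k), p k - x k⟫ + t k * (γ / 2) * ‖p k - x k‖ ^ 2)
    (hFdec : ∀ k, G (jstar k) (x (k + 1)) + H (jstar k) (x (k + 1)) <
      G (jstar k) (x k) + H (jstar k) (x k)) :
    ∃ c : ℝ, c = (1 + 1 / (2 - γ * α)) / min 1 (τ₁ * γ / (⨆ j, L j)) ∧ 0 < c ∧
      ∀ k, (⨆ i, (⟪G' i (x k), p k - x k⟫ + H i (p k) - H i (x k))) +
          1 / (2 * α) * ‖p k - x k‖ ^ 2 ≥
        c * ((G (jstar k) (x (k + 1)) + H (jstar k) (x (k + 1))) -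
          (G (jstar k) (x k) + H (jstar k) (x k))) := by
  haveI : Nonempty (Fin m) := ⟨⟨0, hm⟩⟩
  have hγα : γ * α < 2 := (lt_div_iff₀ hα).mp hγ2
  have h2γα : 0 < 2 - γ * α := by linarith
  have hinvpos : 0 < 1 / (2 - γ * α) := by positivity
  have hLsup : 0 < ⨆ j, L j :=
    lt_of_lt_of_le (hL ⟨0, hm⟩) (le_ciSup (Set.finite_range L).bddAbove ⟨0, hm⟩)
  have htmin0 : 0 < min 1 (τ₁ * γ / (⨆ j, L j)) := lt_min one_pos (by positivity)
  set tmin := min 1 (τ₁ * γ / (⨆ j, L j)) with htmindef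
  set c := (1 + 1 / (2 - γ * α)) / tmin with hcdef
  clear_value tmin c
  have hc0 : 0 < c := by rw [hcdef]; exact div_pos (by linarith) htmin0
  refine ⟨c, by rw [hcdef], hc0, fun k => ?_⟩
  have htk := ht k
  set S := ⨆ i, (⟪G' i (x k), p k - x k⟫ + H i (p k) - H i (x k)) with hSdef
  set Q := 1 / (2 * α) * ‖p k - x k‖ ^ 2 with hQdef
  clear_value S Q
  have hQ0 : 0 ≤ Q := by rw [hQdef]; positivity
  -- Step A: S + Q ≤ -Q
  have key : ∀ s : ℝ, 0 < s → s < 1 → S + Q ≤ s * S + s ^ 2 * Q := by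
    intro s hs0 hs1
    set u := (1 - s) • x k + s • p k with hudef
    clear_value u
    have hu : u ∈ dom := hudef ▸ hdomconv (hx k) (hp k) (by linarith) hs0.le (by ring)
    have hux : u - x k = s • (p k - x k) := by rw [hudef]; module
    have hmin : (⨆ i, (⟪G' i (x k), p k - x k⟫ + H i (p k) - H i (x k))) +
          1 / (2 * α) * ‖p k - x k‖ ^ 2 ≤
        (⨆ i, (⟪G' i (x k), u - x k⟫ + H i u - H i (x k))) + 1 / (2 * α) * ‖u - x k‖ ^ 2 :=
      isMinOn_iff.mp (hpmin k) u hu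
    rw [← hSdef, ← hQdef] at hmin
    have hnorm : ‖u - x k‖ ^ 2 = s ^ 2 * ‖p k - x k‖ ^ 2 := by
      rw [hux, norm_smul, mul_pow, Real.norm_eq_abs, sq_abs]
    have hQu : 1 / (2 * α) * ‖u - x k‖ ^ 2 = s ^ 2 * Q := by rw [hnorm, hQdef]; ring
    have hSu : (⨆ i, (⟪G' i (x k), u - x k⟫ + H i u - H i (x k))) ≤ s * S := by
      apply ciSup_le
      intro i
      have h1 : ⟪G' i (x k), u - x k⟫ = s * ⟪G' i (x k), p k - x k⟫ := by
        rw [hux, real_inner_smul_right]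
      have h2 : H i u ≤ (1 - s) * H i (x k) + s * H i (p k) := by
        rw [hudef]
        exact (hHconv i).2 (hx k) (hp k) (by linarith) hs0.le (by ring)
      have h3 : ⟪G' i (x k), p k - x k⟫ + H i (p k) - H i (x k) ≤ S := by
        rw [hSdef]
        exact le_ciSup (f := fun i => ⟪G' i (x k), p k - x k⟫ + H i (p k) - H i (x k))
          (Set.finite_range _).bddAbove i
      have h4 := mul_le_mul_of_nonneg_left h3 hs0.le
      rw [h1]; linarith [h2, h4]
    linarith [hmin, hSu, hQu.le, hQu.ge]
  have hθQ : S + Q ≤ -Q := by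
    refine le_of_forall_pos_le_add fun ε hε => ?_
    set δ := min (1/2 : ℝ) (ε / (Q + 1)) with hδdef
    have hδ0 : 0 < δ := lt_min (by norm_num) (by positivity)
    have hδhalf : δ ≤ 1/2 := min_le_left _ _
    have hδε : δ * (Q + 1) ≤ ε := by
      have h := min_le_right (1/2 : ℝ) (ε / (Q + 1))
      calc δ * (Q + 1) ≤ (ε / (Q + 1)) * (Q + 1) :=
            mul_le_mul_of_nonneg_right h (by positivity)
        _ = ε := by field_simp
    have hk := key (1 - δ) (by linarith) (by linarith)
    -- (from hk): δ * (S + (2 - δ) * Q) ≤ 0, hence S + (2 - δ) * Q ≤ 0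
    have h5 : δ * (S + (2 - δ) * Q) ≤ 0 := by linarith [hk]
    have h6 : S + (2 - δ) * Q ≤ 0 := by
      by_contra hcon
      push_neg at hcon
      linarith [mul_pos hδ0 hcon]
    -- S + Q ≤ -Q + δ * Q ≤ -Q + ε
    have h7 : δ * Q ≤ ε := by linarith [hδε, hδ0.le]
    linarith
  have hθ0 : S + Q ≤ 0 := by linarith
  -- Step B: F decrease bound
  have hGd := hdec k
  have hxk1 : x (k + 1) = (1 - t k) • x k + t k • p k := by rw [hiter k]; module
  have hHd : H (jstar k) (x (k + 1)) ≤
      (1 - t k) * H (jstar k) (x k) + t k * H (jstar k) (p k) := by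
    rw [hxk1]
    exact (hHconv _).2 (hx k) (hp k) (by linarith [htk.2]) htk.1.le (by ring)
  have hjS : ⟪G' (jstar k) (x k), p k - x k⟫ + H (jstar k) (p k) - H (jstar k) (x k) ≤ S := by
    rw [hSdef]
    exact le_ciSup (f := fun i => ⟪G' i (x k), p k - x k⟫ + H i (p k) - H i (x k))
      (Set.finite_range _).bddAbove (jstar k)
  have hjS' := mul_le_mul_of_nonneg_left hjS htk.1.le
  have hQ' : t k * (γ / 2) * ‖p k - x k‖ ^ 2 = t k * (γ * α) * Q := by
    rw [hQdef]; field_simp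
  have hΔ : (G (jstar k) (x (k + 1)) + H (jstar k) (x (k + 1))) -
      (G (jstar k) (x k) + H (jstar k) (x k)) ≤ t k * S + t k * (γ * α) * Q := by
    linarith [hGd, hHd, hjS', hQ'.le, hQ'.ge]
  -- c * t k lower bound
  have hctmin : c * tmin = 1 + 1 / (2 - γ * α) := by
    rw [hcdef]; field_simp
  have hct : 1 + 1 / (2 - γ * α) ≤ c * t k := by
    have := mul_le_mul_of_nonneg_left (htmin k) hc0.le
    linarith
  rw [ge_iff_le]
  rcases le_total (γ * α) 1 with hcase | hcase
  · -- γα ≤ 1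
    have h1 : t k * (γ * α) * Q ≤ t k * Q := by
      linarith [mul_nonneg (mul_nonneg htk.1.le hQ0) (show (0:ℝ) ≤ 1 - γ * α by linarith)]
    have hΔ2 : (G (jstar k) (x (k + 1)) + H (jstar k) (x (k + 1))) -
        (G (jstar k) (x k) + H (jstar k) (x k)) ≤ t k * (S + Q) := by linarith [hΔ, h1]
    have h2 := mul_le_mul_of_nonneg_left hΔ2 hc0.le
    have hct1 : 1 ≤ c * t k := by linarith
    have h3 := mul_le_mul_of_nonpos_right hct1 hθ0
    linarith [h2, h3]
  · -- γα ≥ 1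
    have hQθ : Q ≤ -(S + Q) := by linarith
    have h1 := mul_le_mul_of_nonneg_left hQθ (show (0:ℝ) ≤ γ * α - 1 by linarith)
    have h2 := mul_le_mul_of_nonneg_left h1 htk.1.le
    have hΔ2 : (G (jstar k) (x (k + 1)) + H (jstar k) (x (k + 1))) -
        (G (jstar k) (x k) + H (jstar k) (x k)) ≤ t k * ((2 - γ * α) * (S + Q)) := by
      linarith [hΔ, h2]
    have h3 := mul_le_mul_of_nonneg_left hΔ2 hc0.le
    have hinv : 1 / (2 - γ * α) * (2 - γ * α) = 1 := by field_simp
    have hK : 1 ≤ c * t k * (2 - γ * α) := by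
      have h4 := mul_le_mul_of_nonneg_right hct h2γα.le
      linarith [h4, hinv]
    have h5 := mul_le_mul_of_nonpos_right hK hθ0
    linarith [h3, h5]
end

section
/- Suppose there are constants c > 0 and a point x̄ ∈ dom(F) with F(x̄) ⪯ F(x^k) for all k, and |θ_α(x^k)| ≤ c(F_{j*_k}(x^k) - F_{j*_k}(x^{k+1})) with F(x^{k+1}) ⪯ F(x^k) for all k. Then for any ε > 0, if |θ_α(x^k)| > ε for k = 0,…,N, then N + 1 < c·Σ_{j=1}^m (F_j(x^0) - F_j(x̄))/ε. Hence the MPG algorithm finds a point with |θ_α(x^k)| ≤ ε in at most O(1/ε) iterations. -/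
/-- Iteration-complexity bound: if `|θ_α(x^k)| > ε` for `k = 0,…,N`, then
`N + 1 < c · Σ_j (F_j(x^0) - F_j(x̄)) / ε`; hence the MPG algorithm reaches
`|θ_α(x^k)| ≤ ε` in at most `O(1/ε)` iterations. -/
theorem iteration_complexity {n m : ℕ} (hm : 0 < m)
    (F : Fin m → EuclideanSpace ℝ (Fin n) → ℝ)
    (x : ℕ → EuclideanSpace ℝ (Fin n))
    (θ : ℕ → ℝ) (hθ : ∀ k, θ k ≤ 0)
    (jstar : ℕ → Fin m)
    (c : ℝ) (hc : 0 < c)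
    (xbar : EuclideanSpace ℝ (Fin n))
    (hxbar : ∀ k j, F j xbar ≤ F j (x k))
    (hmono : ∀ k j, F j (x (k + 1)) ≤ F j (x k))
    (hbound : ∀ k, |θ k| ≤ c * (F (jstar k) (x k) - F (jstar k) (x (k + 1)))) :
    ∀ ε : ℝ, 0 < ε → ∀ N : ℕ, (∀ k ≤ N, |θ k| > ε) →
      (N + 1 : ℝ) < c * (∑ j, (F j (x 0) - F j xbar)) / ε := by
  intro ε hε N hN
  have h1 : (N + 1 : ℝ) * ε < ∑ k ∈ Finset.range (N + 1), |θ k| := by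
    calc (N + 1 : ℝ) * ε = ∑ _k ∈ Finset.range (N + 1), ε := by
          simp [Finset.sum_const, mul_comm]
      _ < _ := Finset.sum_lt_sum_of_nonempty (by simp)
          (fun k hk => hN k (Nat.lt_succ_iff.mp (Finset.mem_range.mp hk)))
  have h2 : ∑ k ∈ Finset.range (N + 1), |θ k|
      ≤ c * ∑ k ∈ Finset.range (N + 1), (F (jstar k) (x k) - F (jstar k) (x (k + 1))) := by
    rw [Finset.mul_sum]
    exact Finset.sum_le_sum fun k _ => hbound k
  have h4 : ∑ k ∈ Finset.range (N + 1), (F (jstar k) (x k) - F (jstar k) (x (k + 1)))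
      ≤ ∑ j, (F j (x 0) - F j xbar) := by
    calc ∑ k ∈ Finset.range (N + 1), (F (jstar k) (x k) - F (jstar k) (x (k + 1)))
        ≤ ∑ k ∈ Finset.range (N + 1), ∑ j, (F j (x k) - F j (x (k + 1))) :=
          Finset.sum_le_sum fun k _ =>
            Finset.single_le_sum (fun j _ => sub_nonneg.mpr (hmono k j)) (Finset.mem_univ _)
      _ = ∑ j, ∑ k ∈ Finset.range (N + 1), (F j (x k) - F j (x (k + 1))) := Finset.sum_comm
      _ = ∑ j, (F j (x 0) - F j (x (N + 1))) :=
          Finset.sum_congr rfl fun j _ => Finset.sum_range_sub' (fun k => F j (x k)) (N + 1)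
      _ ≤ _ := Finset.sum_le_sum fun j _ => by linarith [hxbar (N + 1) j]
  have key : (N + 1 : ℝ) * ε < c * (∑ j, (F j (x 0) - F j xbar)) := by
    have := mul_le_mul_of_nonneg_left h4 hc.le
    linarith
  rw [lt_div_iff₀ hε]
  linarith
end
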